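/- arXiv:0904.1567 — 8 statements merged into one kernel-verified Lean document; each statement's English description precedes it below -/
import Mathlib

section
/- Let K be a convex body in ℝ^d (a compact convex set with nonempty interior) and let ν be any measure on ℝ^d. Then the uniform asymptotic upper density of ν with respect to Lebesgue measure, defined via compact sets, equals the density of ν with respect to K: D̄(ν;|·|) = D̄_K(ν). -/
open MeasureTheory Set Pointwise Filter ENNReal

/-- The uniform asymptotic upper density of a measure `ν` with respect to `μ`:
`inf` over nonempty compact sets `C` of `sup` over Borel sets `V` with compact
closure of `ν V / μ (C + V)`, where `C + V` is a Minkowski sum. -/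
noncomputable def uaud {G : Type*} [AddCommGroup G] [TopologicalSpace G] [MeasurableSpace G]
    (ν μ : Measure G) : ℝ≥0∞ :=
  ⨅ C ∈ {C : Set G | IsCompact C ∧ C.Nonempty},
    ⨆ V ∈ {V : Set G | MeasurableSet V ∧ IsCompact (closure V)},
      ν V / μ (C + V)

/-- The asymptotic upper density of `ν` with respect to a body `K` in `ℝ^d`:
`limsup_{r → ∞} sup_{x} ν (r K + x) / vol (r K)`. -/
noncomputable def densK {d : ℕ} (K : Set (EuclideanSpace ℝ (Fin d)))
    (ν : Measure (EuclideanSpace ℝ (Fin d))) : ℝ≥0∞ :=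
  Filter.limsup
    (fun r : ℝ => ⨆ x : EuclideanSpace ℝ (Fin d), ν ({x} + r • K) / volume (r • K))
    Filter.atTop

/-!
Lower bound for `D̄_K`: choose `C = -(rK)` in the infimum defining `D̄`. Averaging
`ν((x + rK) ∩ V)` over `x` (Fubini, with Haar invariance) gives
`ν V · |rK| ≤ (sup_x ν(x + rK)) · |-(rK) + V|`; the left side is finite unless the supremum is
infinite, because the relatively compact `V` is covered by finitely many translates of `rK`.

Upper bound: a compact `C` lies in a translate of `cK` for some `c > 0`, so by convexity
`C + (x + rK)` lies in a translate of `(c + r)K`, whose volume is `((c + r)/r)^d |rK|`, and this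
factor tends to `1` as `r → ∞`.
-/

open Topology

theorem lintegral_measure_vadd {G : Type*} [AddGroup G] [MeasurableSpace G] [MeasurableAdd₂ G]
    [MeasurableNeg G] (μ ρ : Measure G) [μ.IsAddLeftInvariant] [SFinite μ] [SFinite ρ]
    {s : Set G} (hs : MeasurableSet s) :
    ∫⁻ x : G, ρ (x +ᵥ s) ∂μ = ρ univ * μ (-s) := by
  have hT : MeasurableSet {p : G × G | -p.1 + p.2 ∈ s} :=
    (measurable_fst.neg.add measurable_snd) hs
  calc ∫⁻ x : G, ρ (x +ᵥ s) ∂μ = μ.prod ρ {p : G × G | -p.1 + p.2 ∈ s} := by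
        rw [Measure.prod_apply hT]
        congr! with x
        ext y
        simp [mem_vadd_set_iff_neg_vadd_mem]
    _ = ∫⁻ y : G, μ (y +ᵥ -s) ∂ρ := by
        rw [Measure.prod_apply_symm hT]
        congr! with y
        ext x
        simp [mem_vadd_set_iff_neg_vadd_mem]
    _ = ρ univ * μ (-s) := by
        simp only [measure_vadd, lintegral_const, mul_comm]

theorem measure_ne_top_of_iSup_measure_vadd_ne_top {G : Type*} [AddGroup G] [TopologicalSpace G]
    [IsTopologicalAddGroup G] [MeasurableSpace G] {ν : Measure G} {s V : Set G}
    (hs : (interior s).Nonempty) (hV : IsCompact (closure V)) (h : ⨆ x : G, ν (x +ᵥ s) ≠ ∞) :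
    ν V ≠ ∞ := by
  obtain ⟨t, ht⟩ := compact_covered_by_add_left_translates hV hs
  simp only [← vadd_eq_add, preimage_vadd] at ht
  refine ne_top_of_le_ne_top (ENNReal.mul_ne_top (natCast_ne_top t.card) h) ?_
  calc ν V ≤ ν (⋃ g ∈ t, -g +ᵥ s) := measure_mono (subset_closure.trans ht)
    _ ≤ ∑ g ∈ t, ν (-g +ᵥ s) := measure_biUnion_finset_le t _
    _ ≤ ∑ _g ∈ t, ⨆ x : G, ν (x +ᵥ s) :=
        Finset.sum_le_sum fun g _ => le_iSup (fun x => ν (x +ᵥ s)) (-g)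
    _ = t.card * ⨆ x : G, ν (x +ᵥ s) := by rw [Finset.sum_const, nsmul_eq_mul]

theorem restrict_measure_vadd_le_indicator {G : Type*} [AddCommGroup G] [MeasurableSpace G]
    (ν : Measure G) {s V : Set G} (hV : MeasurableSet V) (x : G) :
    ν.restrict V (x +ᵥ s) ≤ (-s + V).indicator (fun _ => ⨆ y : G, ν (y +ᵥ s)) x := by
  by_cases hx : x ∈ -s + V
  · rw [indicator_of_mem hx]
    exact (Measure.restrict_le_self _).trans (le_iSup (fun y => ν (y +ᵥ s)) x)
  · have hdisj : (x +ᵥ s) ∩ V = ∅ := by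
      refine eq_empty_of_forall_notMem fun _ ⟨⟨a, ha, hxa⟩, hv⟩ => hx ?_
      exact ⟨-a, neg_mem_neg.mpr ha, _, hv, by simp [← hxa]⟩
    rw [indicator_of_notMem hx, Measure.restrict_apply' hV, hdisj, measure_empty]

theorem measure_mul_le_iSup_measure_vadd_mul {G : Type*} [AddCommGroup G] [TopologicalSpace G]
    [IsTopologicalAddGroup G] [MeasurableSpace G] [MeasurableAdd₂ G] [MeasurableNeg G]
    (ν μ : Measure G) [μ.IsAddLeftInvariant] [SFinite μ] {s V : Set G} (hs : MeasurableSet s)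
    (hsi : (interior s).Nonempty) (hV : MeasurableSet V) (hVc : IsCompact (closure V)) :
    ν V * μ (-s) ≤ (⨆ x : G, ν (x +ᵥ s)) * μ (-s + V) := by
  set M := ⨆ x : G, ν (x +ᵥ s)
  by_cases hM : M = ∞
  · obtain rfl | ⟨v, hv⟩ := V.eq_empty_or_nonempty
    · simp
    calc ν V * μ (-s) ≤ ∞ * μ (v +ᵥ -s) := by rw [measure_vadd]; gcongr; exact le_top
      _ ≤ M * μ (-s + V) := by
          rw [hM, add_comm]
          gcongr
          exact vadd_set_subset_add hv
  · have : IsFiniteMeasure (ν.restrict V) := ⟨by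
      simpa [lt_top_iff_ne_top] using measure_ne_top_of_iSup_measure_vadd_ne_top hsi hVc hM⟩
    calc ν V * μ (-s) = ∫⁻ x : G, ν.restrict V (x +ᵥ s) ∂μ := by
          rw [lintegral_measure_vadd μ _ hs, Measure.restrict_apply_univ]
      _ ≤ ∫⁻ x : G, (-s + V).indicator (fun _ => M) x ∂μ :=
          lintegral_mono (restrict_measure_vadd_le_indicator ν hV)
      _ ≤ M * μ (-s + V) := lintegral_indicator_const_le _ _

theorem uaud_le_iSup_measure_vadd_div {G : Type*} [AddCommGroup G] [TopologicalSpace G]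
    [IsTopologicalAddGroup G] [MeasurableSpace G] [MeasurableAdd₂ G] [MeasurableNeg G]
    (ν μ : Measure G) [μ.IsAddHaarMeasure] [SFinite μ] {s : Set G} (hs : IsCompact s)
    (hsm : MeasurableSet s) (hsi : (interior s).Nonempty) :
    uaud ν μ ≤ (⨆ x : G, ν (x +ᵥ s)) / μ (-s) := by
  have hsi' : (interior (-s)).Nonempty := by
    obtain ⟨z, hz⟩ := hsi
    refine ⟨-z, ?_⟩
    rw [show -s = Homeomorph.neg G ⁻¹' s from rfl, ← Homeomorph.preimage_interior]
    simpa using hz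
  have h0 : μ (-s) ≠ 0 := (μ.measure_pos_of_nonempty_interior hsi').ne'
  refine iInf₂_le_of_le (-s) ⟨hs.neg, hsi'.mono interior_subset⟩ (iSup₂_le fun V ⟨hV, hVc⟩ => ?_)
  have key := measure_mul_le_iSup_measure_vadd_mul ν μ hsm hsi hV hVc
  have hfin : μ (-s + V) ≠ ∞ :=
    (measure_mono (add_subset_add_left subset_closure)).trans_lt (hs.neg.add hVc).measure_lt_top
      |>.ne
  rcases eq_or_ne (μ (-s + V)) 0 with hb | hb
  · rw [hb, mul_zero, nonpos_iff_eq_zero, mul_eq_zero, or_iff_left h0] at key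
    simp [key]
  · rw [ENNReal.div_le_iff hb hfin, div_eq_mul_inv, mul_right_comm, ← div_eq_mul_inv,
      ENNReal.le_div_iff_mul_le (Or.inl h0) (Or.inl hs.neg.measure_lt_top.ne)]
    exact key

theorem exists_subset_vadd_smul_of_isBounded {E : Type*} [NormedAddCommGroup E] [NormedSpace ℝ E]
    {K C : Set E} (hK : (interior K).Nonempty) (hC : Bornology.IsBounded C) :
    ∃ c : ℝ, 0 < c ∧ ∃ y : E, C ⊆ y +ᵥ c • K := by
  obtain ⟨z, hz⟩ := hK
  obtain ⟨δ, hδ, hball⟩ := Metric.mem_nhds_iff.mp (mem_interior_iff_mem_nhds.mp hz)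
  obtain ⟨R, hR, hCR⟩ := hC.subset_ball_lt 0 0
  have hc : 0 < R / δ := div_pos hR hδ
  refine ⟨R / δ, hc, -((R / δ) • z), hCR.trans ?_⟩
  calc Metric.ball 0 R = -((R / δ) • z) +ᵥ (R / δ) • Metric.ball z δ := by
        rw [smul_ball hc.ne', Metric.vadd_ball, Real.norm_of_nonneg hc.le,
          div_mul_cancel₀ R hδ.ne', vadd_eq_add, neg_add_cancel]
    _ ⊆ -((R / δ) • z) +ᵥ (R / δ) • K := vadd_set_mono (smul_set_mono hball)

section FiniteDimensional

variable {E : Type*} [NormedAddCommGroup E] [NormedSpace ℝ E] [FiniteDimensional ℝ E]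
  [MeasurableSpace E] [BorelSpace E] (ν μ : Measure E) [μ.IsAddHaarMeasure]

theorem iSup_measure_vadd_smul_div_le {K C : Set E} (hK : IsCompact K) (hKc : Convex ℝ K)
    (hKi : (interior K).Nonempty) (hC : C.Nonempty) {c r : ℝ} (hc : 0 ≤ c) (hr : 0 < r) {y : E}
    (hCK : C ⊆ y +ᵥ c • K) :
    ⨆ x : E, ν (x +ᵥ r • K) / μ (r • K) ≤
      (⨆ V ∈ {V : Set E | MeasurableSet V ∧ IsCompact (closure V)}, ν V / μ (C + V)) *
        ENNReal.ofReal (((c + r) / r) ^ Module.finrank ℝ E) := by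
  set S := ⨆ V ∈ {V : Set E | MeasurableSet V ∧ IsCompact (closure V)}, ν V / μ (C + V)
  have hrK0 : μ (r • K) ≠ 0 := by
    refine (μ.measure_pos_of_nonempty_interior ?_).ne'
    rw [interior_smul₀ hr.ne']
    exact hKi.smul_set
  have hrKtop : μ (r • K) ≠ ∞ := (hK.smul r).measure_lt_top.ne
  refine iSup_le fun x => ?_
  have hVc : IsCompact (x +ᵥ r • K) := (hK.smul r).vadd x
  have hCV : C + (x +ᵥ r • K) ⊆ (y + x) +ᵥ (c + r) • K := by
    rw [hKc.add_smul hc hr.le, ← vadd_add_vadd]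
    exact add_subset_add_right hCK
  have hCV0 : μ (C + (x +ᵥ r • K)) ≠ 0 := by
    obtain ⟨p, hp⟩ := hC
    refine ne_bot_of_le_ne_bot ?_ (measure_mono (vadd_set_subset_add hp))
    rwa [measure_vadd, measure_vadd]
  have hCVtop : μ (C + (x +ᵥ r • K)) ≠ ∞ :=
    ((measure_mono hCV).trans_lt ((hK.smul _).vadd _).measure_lt_top).ne
  have hνV : ν (x +ᵥ r • K) ≤ S * μ (C + (x +ᵥ r • K)) := by
    rw [← ENNReal.div_le_iff hCV0 hCVtop]
    exact le_iSup₂_of_le (f := fun V (_ : V ∈ {V : Set E | MeasurableSet V ∧ IsCompact (closure V)}) =>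
      ν V / μ (C + V)) _ ⟨hVc.measurableSet, by rwa [hVc.isClosed.closure_eq]⟩ le_rfl
  have hscale : μ ((c + r) • K) = ENNReal.ofReal (((c + r) / r) ^ Module.finrank ℝ E) * μ (r • K) := by
    rw [← Measure.addHaar_smul_of_nonneg μ (by positivity), smul_smul, div_mul_cancel₀ _ hr.ne']
  calc ν (x +ᵥ r • K) / μ (r • K) ≤ S * μ ((c + r) • K) / μ (r • K) := by
        gcongr
        calc ν (x +ᵥ r • K) ≤ S * μ (C + (x +ᵥ r • K)) := hνV
          _ ≤ S * μ ((y + x) +ᵥ (c + r) • K) := by gcongr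
          _ = S * μ ((c + r) • K) := by rw [measure_vadd]
    _ = S * ENNReal.ofReal (((c + r) / r) ^ Module.finrank ℝ E) := by
        rw [hscale, ← mul_assoc, ENNReal.mul_div_cancel_right hrK0 hrKtop]

theorem limsup_iSup_measure_vadd_smul_div_le {K C : Set E} (hK : IsCompact K) (hKc : Convex ℝ K)
    (hKi : (interior K).Nonempty) (hC : Bornology.IsBounded C) (hCne : C.Nonempty) :
    limsup (fun r : ℝ => ⨆ x : E, ν (x +ᵥ r • K) / μ (r • K)) atTop ≤
      ⨆ V ∈ {V : Set E | MeasurableSet V ∧ IsCompact (closure V)}, ν V / μ (C + V) := by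
  set S := ⨆ V ∈ {V : Set E | MeasurableSet V ∧ IsCompact (closure V)}, ν V / μ (C + V)
  rcases eq_or_ne S ∞ with hS | hS
  · exact hS ▸ le_top
  obtain ⟨c, hc, y, hCK⟩ := exists_subset_vadd_smul_of_isBounded hKi hC
  have hlim : Tendsto (fun r : ℝ => ENNReal.ofReal (((c + r) / r) ^ Module.finrank ℝ E)) atTop
      (𝓝 1) := by
    have h : Tendsto (fun r : ℝ => c / r + 1) atTop (𝓝 1) := by
      simpa using (tendsto_const_nhds.div_atTop tendsto_id).add_const (1 : ℝ)
    have h' : ∀ᶠ r : ℝ in atTop, c / r + 1 = (c + r) / r :=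
      (eventually_gt_atTop 0).mono fun r hr => by rw [div_add_one hr.ne']
    simpa using ENNReal.tendsto_ofReal ((h.congr' h').pow (Module.finrank ℝ E))
  calc limsup (fun r : ℝ => ⨆ x : E, ν (x +ᵥ r • K) / μ (r • K)) atTop
      ≤ limsup (fun r : ℝ => S * ENNReal.ofReal (((c + r) / r) ^ Module.finrank ℝ E)) atTop :=
        limsup_le_limsup ((eventually_gt_atTop 0).mono fun r hr =>
          iSup_measure_vadd_smul_div_le ν μ hK hKc hKi hCne hc.le hr hCK)
    _ = S := by rw [ENNReal.limsup_const_mul_of_ne_top hS, hlim.limsup_eq, mul_one]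

theorem uaud_le_limsup_iSup_measure_vadd_smul_div {K : Set E} (hK : IsCompact K)
    (hKi : (interior K).Nonempty) :
    uaud ν μ ≤ limsup (fun r : ℝ => ⨆ x : E, ν (x +ᵥ r • K) / μ (r • K)) atTop := by
  refine le_limsup_of_frequently_le ?_
  refine ((eventually_gt_atTop 0).mono fun r hr => ?_).frequently
  have hrKi : (interior (r • K)).Nonempty := by
    rw [interior_smul₀ hr.ne']
    exact hKi.smul_set
  calc uaud ν μ ≤ (⨆ x : E, ν (x +ᵥ r • K)) / μ (-(r • K)) :=
        uaud_le_iSup_measure_vadd_div ν μ (hK.smul r) (hK.smul r).measurableSet hrKi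
    _ = ⨆ x : E, ν (x +ᵥ r • K) / μ (r • K) := by rw [Measure.measure_neg, ENNReal.iSup_div]

theorem uaud_eq_limsup_iSup_measure_vadd_smul_div {K : Set E} (hK : IsCompact K)
    (hKc : Convex ℝ K) (hKi : (interior K).Nonempty) :
    uaud ν μ = limsup (fun r : ℝ => ⨆ x : E, ν (x +ᵥ r • K) / μ (r • K)) atTop :=
  (uaud_le_limsup_iSup_measure_vadd_smul_div ν μ hK hKi).antisymm <|
    le_iInf₂ fun _C hC => limsup_iSup_measure_vadd_smul_div_le ν μ hK hKc hKi hC.1.isBounded hC.2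

end FiniteDimensional

theorem uaud_eq_densK {d : ℕ} (K : Set (EuclideanSpace ℝ (Fin d)))
    (hKcomp : IsCompact K) (hKconv : Convex ℝ K) (hKint : (interior K).Nonempty)
    (ν : Measure (EuclideanSpace ℝ (Fin d))) :
    uaud ν volume = densK K ν := by
  have htranslate : ∀ (x : EuclideanSpace ℝ (Fin d)) (s : Set (EuclideanSpace ℝ (Fin d))),
      {x} + s = x +ᵥ s := fun x s => by rw [singleton_add]; rfl
  simp only [densK, htranslate]
  exact uaud_eq_limsup_iSup_measure_vadd_smul_div ν volume hKcomp hKconv hKint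
end

section
/- Let K be a convex body in ℝ^d and ν any measure on ℝ^d. Then D̄(ν;|·|) ≥ D̄_K(ν); that is, for every τ < D̄_K(ν) and every compact set C ⊆ ℝ^d there exists a Borel set V with compact closure such that ν(V) > τ·|C+V|. -/
open MeasureTheory Set Pointwise Filter ENNReal

/-!
Since `K` contains a ball, a bounded set `C` fits into a translate of `s • K` for some `s ≥ 0`,
and by convexity `s • K + r • K = (s + r) • K`. Hence `|C + (x + r • K)| ≤ ((s + r) / r) ^ d |r • K|`
with a factor tending to `1` as `r → ∞`. So for `τ < τ' < D̄_K(ν)` and `r` large among those with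
`ν (x + r • K) > τ' |r • K|` for some `x`, the set `V = x + r • K` has `ν V > τ |C + V|`.
-/

open Topology

lemma ENNReal.le_div_of_mul_lt {a b c : ℝ≥0∞} (h : a * b < c) : a ≤ c / b := by
  rcases eq_or_ne b ⊤ with rfl | hb
  · rcases eq_or_ne a 0 with rfl | ha
    · exact zero_le
    · simp [ha] at h
  · exact (ENNReal.le_div_iff_mul_le (Or.inr (ne_bot_of_gt h)) (Or.inl hb)).mpr h.le

lemma MeasureTheory.measure_singleton_add {G : Type*} [AddGroup G] [MeasurableSpace G]
    (μ : Measure G) [μ.IsAddLeftInvariant] (x : G) (A : Set G) : μ ({x} + A) = μ A := by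
  rw [singleton_add]
  exact measure_vadd μ x A

lemma le_uaud_of_forall_exists {G : Type*} [AddCommGroup G] [TopologicalSpace G]
    [MeasurableSpace G] {ν μ : Measure G} {a : ℝ≥0∞}
    (h : ∀ τ < a, ∀ C : Set G, IsCompact C → C.Nonempty →
      ∃ V, MeasurableSet V ∧ IsCompact (closure V) ∧ ν V > τ * μ (C + V)) :
    a ≤ uaud ν μ := by
  refine le_iInf₂ fun C hC => le_of_forall_lt_imp_le_of_dense fun τ hτ => ?_
  obtain ⟨V, hVmeas, hVcl, hV⟩ := h τ hτ C hC.1 hC.2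
  exact le_iSup₂_of_le V ⟨hVmeas, hVcl⟩ (ENNReal.le_div_of_mul_lt hV)

lemma Bornology.IsBounded.exists_add_smul_subset_singleton_add_smul {E : Type*}
    [NormedAddCommGroup E] [NormedSpace ℝ E] {C K : Set E} (hC : Bornology.IsBounded C)
    (hKconv : Convex ℝ K) (hKint : (interior K).Nonempty) :
    ∃ s ≥ (0 : ℝ), ∃ y : E, ∀ r ≥ (0 : ℝ), C + r • K ⊆ {y} + (s + r) • K := by
  obtain ⟨z, hz⟩ := hKint
  obtain ⟨ε, hε, hball⟩ := Metric.isOpen_iff.mp isOpen_interior z hz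
  obtain ⟨R, hR, hCR⟩ := hC.subset_ball_lt 0 0
  set s := R / ε
  have hs : 0 < s := div_pos hR hε
  have hCs : C ⊆ {-(s • z)} + s • K := by
    intro c hc
    refine ⟨-(s • z), rfl, s • (z + s⁻¹ • c), smul_mem_smul_set (interior_subset (hball ?_)), ?_⟩
    · have hc : ‖c‖ < R := by simpa using hCR hc
      rw [Metric.mem_ball, dist_eq_norm, add_sub_cancel_left, norm_smul, Real.norm_of_nonneg
        (inv_pos.mpr hs).le, inv_mul_lt_iff₀ hs]
      calc ‖c‖ < R := hc
        _ = s * ε := (div_mul_cancel₀ R hε.ne').symm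
    · rw [smul_add, smul_inv_smul₀ hs.ne']
      exact neg_add_cancel_left _ _
  refine ⟨s, hs.le, -(s • z), fun r hr => ?_⟩
  rw [hKconv.add_smul hs.le hr, ← add_assoc]
  exact add_subset_add_right hCs

lemma tendsto_add_div_self_pow_atTop (s : ℝ) (d : ℕ) :
    Tendsto (fun r : ℝ => ((s + r) / r) ^ d) atTop (𝓝 1) := by
  have h : Tendsto (fun r : ℝ => s / r + 1) atTop (𝓝 1) := by
    simpa using (tendsto_const_nhds.div_atTop tendsto_id).add_const (1 : ℝ)
  refine (h.congr' ?_).pow d |>.trans (by rw [one_pow])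
  filter_upwards [eventually_ne_atTop 0] with r hr
  rw [add_div, div_self hr]

lemma exists_isCompact_mul_volume_add_lt {d : ℕ} {K : Set (EuclideanSpace ℝ (Fin d))}
    (hKcomp : IsCompact K) (hKconv : Convex ℝ K) (hKint : (interior K).Nonempty)
    {ν : Measure (EuclideanSpace ℝ (Fin d))} {τ : ℝ≥0∞} (hτ : τ < densK K ν)
    {C : Set (EuclideanSpace ℝ (Fin d))} (hC : Bornology.IsBounded C) :
    ∃ V, IsCompact V ∧ τ * volume (C + V) < ν V := by
  obtain ⟨τ', hττ', hτ'⟩ := exists_between hτ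
  obtain ⟨s, hs, y, hCsub⟩ := hC.exists_add_smul_subset_singleton_add_smul hKconv hKint
  have hlim : Tendsto (fun r : ℝ => τ * ENNReal.ofReal (((s + r) / r) ^ d)) atTop (𝓝 τ) := by
    simpa using ENNReal.Tendsto.const_mul (ENNReal.tendsto_ofReal
      (tendsto_add_div_self_pow_atTop s d)) (Or.inr hττ'.ne_top)
  obtain ⟨r, hr_sup, hr_lim, hr⟩ :=
    ((frequently_lt_of_lt_limsup (by isBoundedDefault) hτ').and_eventually
      ((hlim.eventually (gt_mem_nhds hττ')).and (eventually_gt_atTop 0))).exists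
  obtain ⟨x, hx⟩ := lt_iSup_iff.mp hr_sup
  refine ⟨{x} + r • K, isCompact_singleton.add (hKcomp.smul r), ?_⟩
  have hvol : volume (C + ({x} + r • K)) ≤
      ENNReal.ofReal (((s + r) / r) ^ d) * volume (r • K) := by
    calc volume (C + ({x} + r • K)) = volume (C + r • K) := by
          rw [add_left_comm, measure_singleton_add]
      _ ≤ volume ((s + r) • K) := by
          grw [hCsub r hr.le, measure_singleton_add]
      _ = ENNReal.ofReal (((s + r) / r) ^ d) * volume (r • K) := by
          have hsr : 0 ≤ s + r := add_nonneg hs hr.le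
          rw [Measure.addHaar_smul_of_nonneg _ hsr, Measure.addHaar_smul_of_nonneg _ hr.le,
            ← mul_assoc, ← ENNReal.ofReal_mul (pow_nonneg (div_nonneg hsr hr.le) d),
            finrank_euclideanSpace_fin, div_pow, div_mul_cancel₀ _ (pow_ne_zero d hr.ne')]
  calc τ * volume (C + ({x} + r • K))
      ≤ τ * ENNReal.ofReal (((s + r) / r) ^ d) * volume (r • K) := by
        rw [mul_assoc]; gcongr
    _ ≤ τ' * volume (r • K) := by gcongr
    _ < ν ({x} + r • K) := ENNReal.mul_lt_of_lt_div hx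

theorem uaud_ge_densK {d : ℕ} (K : Set (EuclideanSpace ℝ (Fin d)))
    (hKcomp : IsCompact K) (hKconv : Convex ℝ K) (hKint : (interior K).Nonempty)
    (ν : Measure (EuclideanSpace ℝ (Fin d))) :
    uaud ν volume ≥ densK K ν ∧
      ∀ τ : ℝ≥0∞, τ < densK K ν →
        ∀ C : Set (EuclideanSpace ℝ (Fin d)), IsCompact C → C.Nonempty →
          ∃ V : Set (EuclideanSpace ℝ (Fin d)),
            MeasurableSet V ∧ IsCompact (closure V) ∧ ν V > τ * volume (C + V) := by
  have key : ∀ τ < densK K ν, ∀ C, IsCompact C → C.Nonempty →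
      ∃ V, MeasurableSet V ∧ IsCompact (closure V) ∧ ν V > τ * volume (C + V) := by
    intro τ hτ C hC _
    obtain ⟨V, hV, hlt⟩ := exists_isCompact_mul_volume_add_lt hKcomp hKconv hKint hτ hC.isBounded
    exact ⟨V, hV.isClosed.measurableSet, by rwa [hV.isClosed.closure_eq], hlt⟩
  exact ⟨le_uaud_of_forall_exists key, key⟩
end

section
/- Let A ⊆ ℝ^d be a Lebesgue measurable set with Δ̄(A) > 0. Then there exist points b₁, …, b_k ∈ ℝ^d with k ≤ ⌊1/Δ̄(A)⌋ such that the union of the translates (A − A) + b_j, j = 1, …, k, covers all of ℝ^d. -/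
open MeasureTheory Set Pointwise Filter ENNReal

/-- The finite-translate variant: `inf` over nonempty *finite* sets `F` of `sup`
over Borel sets `V` with compact closure of `ν V / μ (F + V)`. -/
noncomputable def fuaud {G : Type*} [AddCommGroup G] [TopologicalSpace G] [MeasurableSpace G]
    (ν μ : Measure G) : ℝ≥0∞ :=
  ⨅ F ∈ {F : Set G | F.Finite ∧ F.Nonempty},
    ⨆ V ∈ {V : Set G | MeasurableSet V ∧ IsCompact (closure V)},
      ν V / μ (F + V)

theorem diff_set_translates_cover_Rd {d : ℕ} (A : Set (EuclideanSpace ℝ (Fin d)))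
    (hA : MeasurableSet A)
    (hpos : 0 < fuaud (volume.restrict A) volume) :
    ∃ (k : ℕ) (b : Fin k → EuclideanSpace ℝ (Fin d)),
      (k : ℝ≥0∞) ≤ 1 / fuaud (volume.restrict A) volume ∧
      (⋃ j, (A - A) + {b j}) = Set.univ := by
  set δ := fuaud (volume.restrict A) volume with hδdef
  have hδ0 : δ ≠ 0 := hpos.ne'
  -- key counting lemma
  have key : ∀ (n : ℕ) (t : Fin n → EuclideanSpace ℝ (Fin d)),
      (∀ i j : Fin n, i ≠ j → t i - t j ∉ A - A) → δ ≤ 1 / (n : ℝ≥0∞) := by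
    intro n t ht
    rcases Nat.eq_zero_or_pos n with rfl | hn
    · simp
    have hFmem : Set.range t ∈ {F : Set (EuclideanSpace ℝ (Fin d)) | F.Finite ∧ F.Nonempty} :=
      ⟨Set.finite_range t, ⟨t ⟨0, hn⟩, Set.mem_range_self _⟩⟩
    have h1 : δ ≤ ⨆ V ∈ {V : Set (EuclideanSpace ℝ (Fin d)) |
        MeasurableSet V ∧ IsCompact (closure V)},
        (volume.restrict A) V / volume (Set.range t + V) := by
      rw [hδdef]
      simp only [fuaud]
      exact iInf₂_le _ hFmem
    refine h1.trans (iSup₂_le fun V hV => ?_)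
    have hVm : MeasurableSet V := hV.1
    rw [Measure.restrict_apply hVm]
    have hsub : ∀ i : Fin n, t i +ᵥ (V ∩ A) ⊆ Set.range t + V := by
      rintro i x ⟨y, hy, rfl⟩
      exact ⟨t i, Set.mem_range_self _, y, hy.1, rfl⟩
    have hdisj : Pairwise (Function.onFun Disjoint
        fun i : Fin n => t i +ᵥ (V ∩ A)) := by
      intro i j hij
      rw [Function.onFun, Set.disjoint_left]
      rintro x ⟨y, hy, rfl⟩ ⟨z, hz, hzx⟩
      refine ht i j hij ⟨z, hz.2, y, hy.2, ?_⟩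
      have h : t j + z = t i + y := hzx
      rw [sub_eq_sub_iff_add_eq_add, add_comm z (t j), h]
    have hmeas : ∀ i : Fin n, MeasurableSet (t i +ᵥ (V ∩ A)) :=
      fun i => (hVm.inter hA).const_vadd (t i)
    have hsum : (n : ℝ≥0∞) * volume (V ∩ A) ≤ volume (Set.range t + V) := by
      calc (n : ℝ≥0∞) * volume (V ∩ A)
          = ∑' i : Fin n, volume (t i +ᵥ (V ∩ A)) := by
            simp [measure_vadd, tsum_fintype, Finset.sum_const, nsmul_eq_mul]
        _ = volume (⋃ i, t i +ᵥ (V ∩ A)) := (measure_iUnion hdisj hmeas).symm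
        _ ≤ volume (Set.range t + V) := measure_mono (Set.iUnion_subset hsub)
    apply ENNReal.div_le_of_le_mul
    have hn0 : (n : ℝ≥0∞) ≠ 0 := Nat.cast_ne_zero.mpr hn.ne'
    calc volume (V ∩ A)
        = 1 / (n : ℝ≥0∞) * ((n : ℝ≥0∞) * volume (V ∩ A)) := by
          rw [one_div, ← mul_assoc, ENNReal.inv_mul_cancel hn0 (ENNReal.natCast_ne_top n),
            one_mul]
      _ ≤ 1 / (n : ℝ≥0∞) * volume (Set.range t + V) := by gcongr
  set S : Set ℕ := {n | ∃ t : Fin n → EuclideanSpace ℝ (Fin d),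
    ∀ i j : Fin n, i ≠ j → t i - t j ∉ A - A} with hSdef
  have h1S : 1 ∈ S := ⟨fun _ => 0, fun i j hij => absurd (Subsingleton.elim i j) hij⟩
  have hle : ∀ n ∈ S, (n : ℝ≥0∞) ≤ 1 / δ := by
    rintro n ⟨t, ht⟩
    have h := key n t ht
    rw [one_div] at h ⊢
    calc (n : ℝ≥0∞) = ((n : ℝ≥0∞)⁻¹)⁻¹ := (inv_inv _).symm
      _ ≤ δ⁻¹ := ENNReal.inv_le_inv.mpr h
  obtain ⟨N, hN⟩ := ENNReal.exists_nat_gt (show 1 / δ ≠ ⊤ by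
    simp [one_div, ENNReal.inv_ne_top, hδ0])
  have hbdd : BddAbove S := ⟨N, fun n hn => by
    have h := (hle n hn).trans_lt hN
    exact_mod_cast h.le⟩
  have hkS : sSup S ∈ S := Nat.sSup_mem ⟨1, h1S⟩ hbdd
  obtain ⟨t, ht⟩ := hkS
  refine ⟨sSup S, t, hle _ ⟨t, ht⟩, ?_⟩
  rw [Set.eq_univ_iff_forall]
  intro x
  by_contra hx
  rw [Set.mem_iUnion] at hx
  push_neg at hx
  have hx' : ∀ j, x - t j ∉ A - A := by
    intro j hmem
    have h := Set.add_mem_add hmem (Set.mem_singleton (t j))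
    rw [sub_add_cancel] at h
    exact hx j h
  have hsymm : ∀ j, t j - x ∉ A - A := by
    intro j hmem
    obtain ⟨p, hp, q, hq, hpq⟩ := hmem
    have hpq' : p - q = t j - x := hpq
    refine hx' j ⟨q, hq, p, hp, ?_⟩
    show q - p = x - t j
    rw [← neg_sub p q, hpq', neg_sub]
  have hk1 : sSup S + 1 ∈ S := by
    refine ⟨fun i => if h : (i : ℕ) < sSup S then t ⟨i, h⟩ else x, ?_⟩
    intro i j hij
    by_cases hi : (i : ℕ) < sSup S <;> by_cases hj : (j : ℕ) < sSup S
    · simp only [dif_pos hi, dif_pos hj]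
      refine ht ⟨i, hi⟩ ⟨j, hj⟩ fun hc => hij ?_
      have hval : (i : ℕ) = (j : ℕ) := by injection hc
      exact Fin.ext hval
    · simp only [dif_pos hi, dif_neg hj]
      exact hsymm ⟨i, hi⟩
    · simp only [dif_neg hi, dif_pos hj]
      exact hx' ⟨j, hj⟩
    · have h1 := i.isLt
      have h2 := j.isLt
      exact absurd (Fin.ext (by omega)) hij
  have hcontra : sSup S + 1 ≤ sSup S := le_csSup hbdd hk1
  omega
end

section
/- Let G be a locally compact abelian group with Haar measure μ and let S ⊆ G be a set whose uniform asymptotic upper density with respect to the counting measure of S is positive and finite: 0 < D̄(#|_S;μ) < ∞. Then the difference set S − S is syndetic. -/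
open MeasureTheory Set Pointwise Filter ENNReal

/-- The counting measure of the set `S`: the sum of Dirac measures at the points of `S`,
so that `countOn S V = #(S ∩ V)` for measurable `V`. -/
noncomputable def countOn {G : Type*} [MeasurableSpace G] (S : Set G) : Measure G :=
  Measure.sum (fun s : S => Measure.dirac (s : G))

/-- `T` is syndetic if a compact set of translates of `T` covers `G`. -/
def IsSyndetic {G : Type*} [AddCommGroup G] [TopologicalSpace G] (T : Set G) : Prop :=
  ∃ K : Set G, IsCompact K ∧ K + T = Set.univ

/-!
If `S - S` is not syndetic, then for a compact neighbourhood `C` of `0` there are arbitrarily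
many points `x₁, …, xₙ` whose pairwise differences avoid `S - S + (C - C)`. For a finite
`E ⊆ S` the translates `s + xᵢ + C` (`s ∈ E`) then meet only for equal `i`, so a point `y` lies in
at most `#(S ∩ (y - xᵢ - C)) ≤ c · μ (C₀ - C)` of them, where `C₀` and `c` witness the finite
upper density. Comparing total measure with multiplicity inside `{xᵢ} + C + E` gives
`n · μ C · D̄ ≤ c · μ (C₀ - C)` for every `n`, which forces `D̄ = 0`.
-/

open scoped Finset

section CountingMeasure

variable {G : Type*} [MeasurableSpace G] {S V : Set G}

lemma countOn_apply (S : Set G) (hV : MeasurableSet V) : countOn S V = (S ∩ V).encard := by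
  simp only [countOn, Measure.sum_apply _ hV, Measure.dirac_apply' _ hV]
  rw [tsum_subtype S (V.indicator 1), indicator_indicator, ← tsum_subtype]
  exact tsum_set_one _

lemma countOn_empty : countOn (∅ : Set G) = 0 :=
  Measure.sum_of_isEmpty _

lemma card_le_countOn {E : Finset G} (hE : ↑E ⊆ S ∩ V) (hV : MeasurableSet V) :
    (#E : ℝ≥0∞) ≤ countOn S V := by
  have h := encard_le_encard hE
  rw [encard_coe_eq_coe_finsetCard] at h
  rw [countOn_apply S hV]
  exact_mod_cast h

lemma exists_finset_eq_inter_of_countOn_ne_top (hV : MeasurableSet V) (h : countOn S V ≠ ⊤) :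
    ∃ E : Finset G, ↑E = S ∩ V ∧ countOn S V = #E := by
  rw [countOn_apply S hV] at h ⊢
  have hfin : (S ∩ V).Finite := encard_ne_top_iff.mp (by exact_mod_cast h)
  exact ⟨hfin.toFinset, hfin.coe_toFinset, by rw [hfin.encard_eq_coe_toFinset_card]; rfl⟩

end CountingMeasure

section UniformDensity

variable {G : Type*} [AddCommGroup G] [TopologicalSpace G] [MeasurableSpace G] {ν μ : Measure G}

lemma uaud_zero_left (μ : Measure G) : uaud 0 μ = 0 :=
  le_antisymm ((iInf₂_le {0} ⟨isCompact_singleton, singleton_nonempty 0⟩).trans (by simp))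
    zero_le

lemma exists_le_mul_measure_add_of_uaud_lt {c : ℝ≥0∞} (h : uaud ν μ < c) :
    ∃ C₀, IsCompact C₀ ∧
      ∀ V, MeasurableSet V → IsCompact (closure V) → ν V ≤ c * μ (C₀ + V) := by
  obtain ⟨C₀, hlt⟩ := iInf_lt_iff.mp h
  obtain ⟨⟨hC₀, -⟩, hlt⟩ := iInf_lt_iff.mp hlt
  refine ⟨C₀, hC₀, fun V hV hVc => ?_⟩
  have hV : ν V / μ (C₀ + V) < c :=
    (le_iSup₂ (f := fun V (_ : V ∈ {V : Set G | MeasurableSet V ∧ IsCompact (closure V)}) =>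
      ν V / μ (C₀ + V)) V ⟨hV, hVc⟩).trans_lt hlt
  by_cases h0 : μ (C₀ + V) = 0
  -- `ν V / 0 = ⊤` unless `ν V = 0`
  · by_contra hne
    rw [h0, ENNReal.div_zero (ne_zero_of_lt (not_le.mp hne))] at hV
    exact not_top_lt hV
  · exact (ENNReal.div_le_iff_le_mul (.inl h0) (.inr (zero_le.trans_lt h).ne')).mp hV.le

end UniformDensity

lemma exists_finset_card_eq_pairwise_sub_notMem {G : Type*} [AddCommGroup G] {U : Set G}
    (hU₀ : (0 : G) ∈ U) (hUneg : -U = U) (hU : ∀ F : Finset G, ∃ g, g ∉ (F : Set G) + U)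
    (n : ℕ) : ∃ F : Finset G, #F = n ∧ (F : Set G).Pairwise fun x y => x - y ∉ U := by
  classical
  have : Std.Symm fun x y : G => x - y ∉ U :=
    ⟨fun x y h hyx => h (by rw [← hUneg, ← neg_sub]; exact neg_mem_neg.mpr hyx)⟩
  induction n with
  | zero => exact ⟨∅, rfl, by simp⟩
  | succ n ih =>
    obtain ⟨F, rfl, hF⟩ := ih
    obtain ⟨g, hg⟩ := hU F
    have hgF : g ∉ F := fun h => hg ⟨g, h, 0, hU₀, add_zero g⟩
    refine ⟨insert g F, Finset.card_insert_of_notMem hgF, ?_⟩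
    rw [Finset.coe_insert, pairwise_insert_of_symm]
    exact ⟨hF, fun x hx _ hgx => hg ⟨x, hx, g - x, hgx, add_sub_cancel x g⟩⟩

open scoped Classical in
lemma sum_measure_le_mul_measure_of_card_le {α ι : Type*} [MeasurableSpace α] (μ : Measure α)
    {I : Finset ι} {A : ι → Set α} {B : Set α} {m : ℝ≥0∞}
    (hA : ∀ i ∈ I, MeasurableSet (A i)) (hAB : ∀ i ∈ I, A i ⊆ B)
    (hm : ∀ y, (#{i ∈ I | y ∈ A i} : ℝ≥0∞) ≤ m) :
    ∑ i ∈ I, μ (A i) ≤ m * μ B := by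
  calc ∑ i ∈ I, μ (A i) = ∫⁻ y, ∑ i ∈ I, (A i).indicator 1 y ∂μ := by
        rw [lintegral_finsetSum _ fun i hi => measurable_one.indicator (hA i hi)]
        exact Finset.sum_congr rfl fun i hi => (lintegral_indicator_one (hA i hi)).symm
    _ ≤ ∫⁻ y, B.indicator (fun _ => m) y ∂μ := lintegral_mono fun y => ?_
    _ ≤ m * μ B := lintegral_indicator_const_le B m
  by_cases hy : y ∈ B
  · rw [indicator_of_mem hy]
    convert hm y
    simp [indicator_apply, Finset.sum_boole]
  · rw [Finset.sum_eq_zero fun i hi => indicator_of_notMem (fun h => hy (hAB i hi h)) _]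
    exact zero_le

open scoped Classical in
lemma exists_card_filter_mem_vadd_le {G : Type*} [AddCommGroup G] {E F : Finset G} {C U : Set G}
    (hsep : (F : Set G).Pairwise fun x y => x - y ∉ U) (hU : (E : Set G) - E + (C - C) ⊆ U)
    (y : G) : ∃ x, #{p ∈ E ×ˢ F | y ∈ (p.1 + p.2) +ᵥ C} ≤ #{s ∈ E | y ∈ (s + x) +ᵥ C} := by
  set P := {p ∈ E ×ˢ F | y ∈ (p.1 + p.2) +ᵥ C}
  obtain hP | ⟨q, hq⟩ := P.eq_empty_or_nonempty
  · exact ⟨0, by simp [hP]⟩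
  have hsnd : ∀ p ∈ P, p.2 = q.2 := by
    intro p hp
    by_contra hne
    simp only [P, Finset.mem_filter, Finset.mem_product, mem_vadd_set, vadd_eq_add] at hp hq
    obtain ⟨⟨hp₁, hp₂⟩, c, hc, hpc⟩ := hp
    obtain ⟨⟨hq₁, hq₂⟩, c', hc', hqc⟩ := hq
    refine hsep hp₂ hq₂ hne (hU ?_)
    have hdiff : p.2 - q.2 = q.1 - p.1 + (c' - c) := by
      rw [← sub_eq_zero, ← sub_eq_zero.mpr (hpc.trans hqc.symm)]
      abel
    exact hdiff ▸ add_mem_add (sub_mem_sub hq₁ hp₁) (sub_mem_sub hc' hc)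
  refine ⟨q.2, ?_⟩
  calc #P ≤ #({s ∈ E | y ∈ (s + q.2) +ᵥ C} ×ˢ {q.2}) := Finset.card_le_card fun p hp => ?_
    _ = #{s ∈ E | y ∈ (s + q.2) +ᵥ C} := by simp
  obtain ⟨p₁, p₂⟩ := p
  obtain rfl : p₂ = q.2 := hsnd _ hp
  simp only [P, Finset.mem_filter, Finset.mem_product] at hp
  exact Finset.mem_product.mpr
    ⟨Finset.mem_filter.mpr ⟨hp.1.1, hp.2⟩, Finset.mem_singleton_self _⟩

lemma exists_separated_finset_of_not_isSyndetic {G : Type*} [AddCommGroup G] [TopologicalSpace G]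
    [IsTopologicalAddGroup G] {S C : Set G} (hS : ¬IsSyndetic (S - S)) (hSne : S.Nonempty)
    (hC : IsCompact C) (hC0 : (0 : G) ∈ C) (n : ℕ) :
    ∃ F : Finset G, #F = n ∧ (F : Set G).Pairwise fun x y => x - y ∉ S - S + (C - C) := by
  refine exists_finset_card_eq_pairwise_sub_notMem ?_ (by simp [neg_sub, add_comm])
    (fun F => ?_) n
  · obtain ⟨s, hs⟩ := hSne
    exact ⟨0, ⟨s, hs, s, hs, sub_self s⟩, 0, ⟨0, hC0, 0, hC0, sub_self 0⟩, add_zero 0⟩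
  by_contra! h
  refine hS ⟨F + (C - C), F.finite_toSet.isCompact.add (sub_eq_add_neg C C ▸ hC.add hC.neg),
    eq_univ_of_forall fun g => ?_⟩
  rw [add_right_comm, add_assoc]
  exact h g

section SeparatedTranslates

variable {G : Type*} [AddCommGroup G] [TopologicalSpace G] [IsTopologicalAddGroup G] [T2Space G]
  [MeasurableSpace G] [BorelSpace G] {μ : Measure G} {S C₀ C : Set G} {c : ℝ≥0∞} {F : Finset G}

lemma card_mul_card_mul_measure_le [μ.IsAddLeftInvariant] (hC : IsCompact C)
    (hupper : ∀ W, MeasurableSet W → IsCompact (closure W) → countOn S W ≤ c * μ (C₀ + W))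
    (hsep : (F : Set G).Pairwise fun x y => x - y ∉ S - S + (C - C))
    {E : Finset G} (hES : ↑E ⊆ S) :
    (#E * #F : ℝ≥0∞) * μ C ≤ c * μ (C₀ + -C) * μ (F + C + E) := by
  classical
  have hA : ∀ p ∈ E ×ˢ F, MeasurableSet ((p.1 + p.2) +ᵥ C) :=
    fun p _ => (hC.vadd _).isClosed.measurableSet
  calc (#E * #F : ℝ≥0∞) * μ C = ∑ p ∈ E ×ˢ F, μ ((p.1 + p.2) +ᵥ C) := by
        simp [measure_vadd, Finset.card_product]
    _ ≤ _ := sum_measure_le_mul_measure_of_card_le μ hA (fun p hp => ?_) (fun y => ?_)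
  · rintro _ ⟨c', hc', rfl⟩
    rw [Finset.mem_product] at hp
    exact ⟨p.2 + c', add_mem_add hp.2 hc', p.1, hp.1,
      show p.2 + c' + p.1 = p.1 + p.2 + c' by abel⟩
  · obtain ⟨x, hx⟩ := exists_card_filter_mem_vadd_le hsep
      (add_subset_add_right (sub_subset_sub hES hES)) y
    have hW : IsCompact ((y - x) +ᵥ -C) := hC.neg.vadd _
    calc _ ≤ (#{s ∈ E | y ∈ (s + x) +ᵥ C} : ℝ≥0∞) := by exact_mod_cast hx
      _ ≤ countOn S ((y - x) +ᵥ -C) := card_le_countOn (fun s hs => ?_) hW.isClosed.measurableSet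
      _ ≤ c * μ (C₀ + ((y - x) +ᵥ -C)) :=
          hupper _ hW.isClosed.measurableSet (by rwa [hW.isClosed.closure_eq])
      _ = c * μ (C₀ + -C) := by rw [add_vadd_comm, measure_vadd]
    rw [Finset.coe_filter, mem_ofPred_eq, mem_vadd_set_iff_neg_vadd_mem] at hs
    refine ⟨hES hs.1, mem_vadd_set_iff_neg_vadd_mem.mpr (Set.mem_neg.mpr ?_)⟩
    convert hs.2 using 1
    simp only [vadd_eq_add]
    abel

lemma card_mul_measure_mul_uaud_le [μ.IsAddLeftInvariant] [IsFiniteMeasureOnCompacts μ]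
    (hc : c ≠ ⊤) (hC₀ : IsCompact C₀) (hC : IsCompact C) (hCne : C.Nonempty)
    (hupper : ∀ W, MeasurableSet W → IsCompact (closure W) → countOn S W ≤ c * μ (C₀ + W))
    (hsep : (F : Set G).Pairwise fun x y => x - y ∉ S - S + (C - C)) :
    #F * μ C * uaud (countOn S) μ ≤ c * μ (C₀ + -C) := by
  obtain rfl | hF := F.eq_empty_or_nonempty
  · simp
  have hFC : IsCompact ((F : Set G) + C) := F.finite_toSet.isCompact.add hC
  calc #F * μ C * uaud (countOn S) μ
      ≤ #F * μ C * ⨆ V ∈ {V : Set G | MeasurableSet V ∧ IsCompact (closure V)},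
          countOn S V / μ (F + C + V) := by
        gcongr
        exact iInf₂_le _ ⟨hFC, (Finset.coe_nonempty.mpr hF).add hCne⟩
    _ ≤ c * μ (C₀ + -C) := by
        simp only [ENNReal.mul_iSup]
        refine iSup₂_le fun V ⟨hV, hVc⟩ => ?_
        have hC₀V : μ (C₀ + V) < ⊤ := (measure_mono (add_subset_add_left subset_closure)).trans_lt
          (hC₀.add hVc).measure_lt_top
        obtain ⟨E, hE, hEV⟩ := exists_finset_eq_inter_of_countOn_ne_top hV
          ((hupper V hV hVc).trans_lt (mul_lt_top hc.lt_top hC₀V)).ne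
        rw [hEV, ← mul_div_assoc]
        refine ENNReal.div_le_of_le_mul ?_
        calc #F * μ C * #E = (#E * #F : ℝ≥0∞) * μ C := by ring
          _ ≤ c * μ (C₀ + -C) * μ (F + C + E) := card_mul_card_mul_measure_le hC hupper hsep
              (hE ▸ inter_subset_left)
          _ ≤ c * μ (C₀ + -C) * μ (F + C + V) := by
              gcongr
              exact hE ▸ inter_subset_right

end SeparatedTranslates

theorem diff_set_syndetic_of_pos_finite_count_uaud {G : Type*} [AddCommGroup G]
    [TopologicalSpace G] [IsTopologicalAddGroup G] [LocallyCompactSpace G] [T2Space G]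
    [MeasurableSpace G] [BorelSpace G]
    (μ : Measure G) [μ.IsAddHaarMeasure] (S : Set G)
    (hpos : 0 < uaud (countOn S) μ) (hfin : uaud (countOn S) μ < ⊤) :
    IsSyndetic (S - S) := by
  by_contra hsyn
  have hS : S.Nonempty := nonempty_iff_ne_empty.mpr fun h => hpos.ne' (by
    rw [h, countOn_empty, uaud_zero_left])
  set d := uaud (countOn S) μ
  have hdd : d + d ≠ ⊤ := add_ne_top.mpr ⟨hfin.ne, hfin.ne⟩
  obtain ⟨C₀, hC₀, hupper⟩ :=
    exists_le_mul_measure_add_of_uaud_lt (ENNReal.lt_add_right hfin.ne hpos.ne' : d < d + d)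
  obtain ⟨C, hC, hC0⟩ := exists_compact_mem_nhds (0 : G)
  obtain ⟨n, hn⟩ : ∃ n : ℕ, (d + d) * μ (C₀ + -C) < n * (μ C * d) :=
    ENNReal.exists_nat_mul_gt (mul_ne_zero (Measure.measure_pos_of_mem_nhds μ hC0).ne' hpos.ne')
      (mul_ne_top hdd (hC₀.add hC.neg).measure_lt_top.ne)
  obtain ⟨F, rfl, hF⟩ :=
    exists_separated_finset_of_not_isSyndetic hsyn hS hC (mem_of_mem_nhds hC0) n
  have hbound := card_mul_measure_mul_uaud_le hdd hC₀ hC ⟨0, mem_of_mem_nhds hC0⟩ hupper hF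
  exact hn.not_ge (by rwa [mul_assoc] at hbound)
end

section
/- Let G be a locally compact abelian group with Haar measure μ, and let ν₀ = ν₁ + … + ν_n be a finite sum of measures on G. Then the uniform asymptotic upper density is subadditive: D̄(ν₀;μ) ≤ D̄(ν₁;μ) + … + D̄(ν_n;μ). In particular, if A₀ = A₁ ∪ … ∪ A_n is a disjoint union of measurable sets and ν is a measure, then D̄(ν|_{A₀};μ) ≤ Σ_{j=1}^{n} D̄(ν|_{A_j};μ). -/
open MeasureTheory Set Pointwise Filter ENNReal

/-! The ratio `ν V / μ (C + V)` is additive in `ν` and antitone in `C`, so the inner suprema form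
a family that is directed downwards along unions of compact sets, and along such a family the
infimum of a finite sum is the sum of the infima (`ENNReal.iInf_sum`). -/

open TopologicalSpace

section

variable {G : Type*} [AddCommGroup G] [TopologicalSpace G] [MeasurableSpace G]

noncomputable def uaudAt (ν μ : Measure G) (C : Set G) : ℝ≥0∞ :=
  ⨆ V ∈ {V : Set G | MeasurableSet V ∧ IsCompact (closure V)}, ν V / μ (C + V)

theorem uaud_eq_iInf_uaudAt (ν μ : Measure G) :
    uaud ν μ = ⨅ K : NonemptyCompacts G, uaudAt ν μ K := by
  refine le_antisymm (le_iInf fun K => iInf₂_le (K : Set G) ⟨K.isCompact, K.nonempty⟩) ?_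
  exact le_iInf₂ fun C ⟨hC, hne⟩ =>
    iInf_le (fun K : NonemptyCompacts G => uaudAt ν μ K) ⟨⟨C, hC⟩, hne⟩

theorem uaudAt_anti (ν μ : Measure G) {C C' : Set G} (h : C ⊆ C') :
    uaudAt ν μ C' ≤ uaudAt ν μ C :=
  iSup₂_mono fun _ _ => ENNReal.div_le_div_left (measure_mono (add_subset_add_right h)) _

theorem uaudAt_finsetSum_le {ι : Type*} (s : Finset ι) (ν : ι → Measure G) (μ : Measure G)
    (C : Set G) : uaudAt (∑ i ∈ s, ν i) μ C ≤ ∑ i ∈ s, uaudAt (ν i) μ C := by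
  refine iSup₂_le fun V hV => ?_
  calc (∑ i ∈ s, ν i) V / μ (C + V) = ∑ i ∈ s, ν i V / μ (C + V) := by
        simp only [Measure.coe_finsetSum, Finset.sum_apply, div_eq_mul_inv, Finset.sum_mul]
    _ ≤ ∑ i ∈ s, uaudAt (ν i) μ C :=
        Finset.sum_le_sum fun i _ =>
          le_iSup₂ (f := fun V _ => ν i V / μ (C + V)) V hV

theorem uaud_finsetSum_le {ι : Type*} (s : Finset ι) (ν : ι → Measure G) (μ : Measure G) :
    uaud (∑ i ∈ s, ν i) μ ≤ ∑ i ∈ s, uaud (ν i) μ := by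
  have directed : ∀ (t : Finset ι) (K L : NonemptyCompacts G), ∃ M : NonemptyCompacts G,
      ∀ i ∈ t, uaudAt (ν i) μ M ≤ uaudAt (ν i) μ K ∧
        uaudAt (ν i) μ M ≤ uaudAt (ν i) μ L :=
    fun _ K L => ⟨K ⊔ L, fun i _ =>
      ⟨uaudAt_anti _ _ (le_sup_left (a := K)), uaudAt_anti _ _ (le_sup_right (b := L))⟩⟩
  simp only [uaud_eq_iInf_uaudAt]
  calc ⨅ K : NonemptyCompacts G, uaudAt (∑ i ∈ s, ν i) μ K
      ≤ ⨅ K : NonemptyCompacts G, ∑ i ∈ s, uaudAt (ν i) μ K :=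
        iInf_mono fun K => uaudAt_finsetSum_le s ν μ K
    _ = ∑ i ∈ s, ⨅ K : NonemptyCompacts G, uaudAt (ν i) μ K := ENNReal.iInf_sum directed

theorem uaud_restrict_iUnion_le {ι : Type*} [Fintype ι] (ν μ : Measure G) {A : ι → Set G}
    (hA : ∀ i, MeasurableSet (A i)) (hd : Pairwise (Function.onFun Disjoint A)) :
    uaud (ν.restrict (⋃ i, A i)) μ ≤ ∑ i, uaud (ν.restrict (A i)) μ := by
  rw [Measure.restrict_iUnion hd hA, Measure.sum_fintype]
  exact uaud_finsetSum_le _ _ μ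

end

theorem uaud_subadditive_general {G : Type*} [AddCommGroup G]
    [TopologicalSpace G]
    [MeasurableSpace G]
    (μ : Measure G) (n : ℕ) (ν : Fin n → Measure G) :
    uaud (∑ j, ν j) μ ≤ ∑ j, uaud (ν j) μ ∧
      ∀ (ν₀ : Measure G) (A : Fin n → Set G), (∀ j, MeasurableSet (A j)) →
        Pairwise (Function.onFun Disjoint A) →
        uaud (ν₀.restrict (⋃ j, A j)) μ ≤ ∑ j, uaud (ν₀.restrict (A j)) μ :=
  ⟨uaud_finsetSum_le _ ν μ, fun ν₀ _ hA hd => uaud_restrict_iUnion_le ν₀ μ hA hd⟩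

theorem uaud_subadditive {G : Type*} [AddCommGroup G]
    [TopologicalSpace G] [IsTopologicalAddGroup G] [LocallyCompactSpace G] [T2Space G]
    [MeasurableSpace G] [BorelSpace G]
    (μ : Measure G) [μ.IsAddHaarMeasure] (n : ℕ) (ν : Fin n → Measure G) :
    uaud (∑ j, ν j) μ ≤ ∑ j, uaud (ν j) μ ∧
      ∀ (ν₀ : Measure G) (A : Fin n → Set G), (∀ j, MeasurableSet (A j)) →
        Pairwise (Function.onFun Disjoint A) →
        uaud (ν₀.restrict (⋃ j, A j)) μ ≤ ∑ j, uaud (ν₀.restrict (A j)) μ :=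
  uaud_subadditive_general μ n ν
end

section
/- Let S ⊆ ℤ have positive upper Banach density: D̄(S) > 0, where D̄(S) := inf over nonempty finite sets F ⊆ ℤ of sup over finite sets V ⊆ ℤ of #(S∩V)/#(F+V). Then S − S is syndetic in ℤ: there is a finite set K ⊆ ℤ with K + (S − S) = ℤ; equivalently, the gaps of S − S are bounded. -/
open Set Pointwise Filter ENNReal

/-- Upper Banach density on `ℤ`: `inf` over nonempty finite sets `F ⊆ ℤ` of `sup`
over finite sets `V ⊆ ℤ` of `#(S ∩ V) / #(F + V)`. -/
noncomputable def banachDensityZ (S : Set ℤ) : ℝ≥0∞ :=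
  ⨅ F ∈ {F : Set ℤ | F.Finite ∧ F.Nonempty},
    ⨆ V ∈ {V : Set ℤ | V.Finite},
      ((S ∩ V).ncard : ℝ≥0∞) / ((F + V).ncard : ℝ≥0∞)

private lemma sds_symm {S : Set ℤ} {t : ℤ} (ht : t ∈ S - S) : -t ∈ S - S := by
  obtain ⟨a, ha, b, hb, rfl⟩ := ht
  exact ⟨b, hb, a, ha, by ring⟩

/-- Construction of `n` nonnegative integers with pairwise differences outside `S - S`,
assuming `S - S` has arbitrarily long gaps. -/
private lemma exists_sep (S : Set ℤ) (hS : (0:ℤ) ∈ S - S)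
    (hgap : ∀ M : ℕ, ∃ x : ℤ, ∀ t ∈ S - S, ¬(x ≤ t ∧ t ≤ x + M)) (n : ℕ) :
    ∃ T : Finset ℤ, T.card = n ∧ (∀ a ∈ T, 0 ≤ a) ∧
      ∀ a ∈ T, ∀ b ∈ T, a ≠ b → a - b ∉ S - S := by
  induction n with
  | zero => exact ⟨∅, rfl, by simp, by simp⟩
  | succ n ih =>
    obtain ⟨T, hcard, hpos, hdiff⟩ := ih
    set R : ℕ := T.sup (fun a => a.toNat) with hR
    have hRb : ∀ a ∈ T, a ≤ (R:ℤ) := by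
      intro a ha
      have h1 : a.toNat ≤ R := Finset.le_sup (f := fun a : ℤ => a.toNat) ha
      have h2 := hpos a ha
      omega
    obtain ⟨x, hx⟩ := hgap R
    have hgap' : ∃ a : ℤ, 1 ≤ a ∧ ∀ t ∈ S - S, ¬(a ≤ t ∧ t ≤ a + R) := by
      rcases le_or_gt 1 x with h1 | h1
      · exact ⟨x, h1, hx⟩
      · have h0 := hx 0 hS
        have hxR : x + (R:ℤ) ≤ -1 := by omega
        refine ⟨-(x + R), by omega, fun t ht hc => ?_⟩
        exact hx (-t) (sds_symm ht) (by omega)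
    obtain ⟨a, ha1, hagap⟩ := hgap'
    refine ⟨insert (a + R) T, ?_, ?_, ?_⟩
    · rw [Finset.card_insert_of_notMem, hcard]
      intro hmem
      have := hRb _ hmem; omega
    · intro b hb
      rcases Finset.mem_insert.1 hb with rfl | hb
      · omega
      · exact hpos b hb
    · intro b hb c hc hbc
      rcases Finset.mem_insert.1 hb with rfl | hb <;> rcases Finset.mem_insert.1 hc with rfl | hc
      · exact absurd rfl hbc
      · intro hmem
        have h1 := hpos c hc; have h2 := hRb c hc
        exact hagap _ hmem ⟨by omega, by omega⟩
      · intro hmem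
        have h1 := hpos b hb; have h2 := hRb b hb
        exact hagap _ (sds_symm hmem) ⟨by omega, by omega⟩
      · exact hdiff b hb c hc hbc

/-- Counting: if the translates of `S` by elements of `T` are pairwise disjoint, then
`#T * #(S ∩ V) ≤ #(-T + V)`. -/
private lemma count_le (S : Set ℤ) (T : Finset ℤ)
    (hdiff : ∀ a ∈ T, ∀ b ∈ T, a ≠ b → a - b ∉ S - S)
    (V : Set ℤ) (hV : V.Finite) :
    T.card * (S ∩ V).ncard ≤ (((T.image (fun a => -a) : Finset ℤ) : Set ℤ) + V).ncard := by
  have hAfin : (S ∩ V).Finite := hV.inter_of_right S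
  set A : Finset ℤ := hAfin.toFinset with hA
  have hAcard : (S ∩ V).ncard = A.card := by
    rw [hA, Set.ncard_eq_toFinset_card _ hAfin]
  set B : Finset ℤ := T.biUnion (fun a => A.image (fun s => s - a)) with hB
  have hdisj : ∀ a ∈ T, ∀ b ∈ T, a ≠ b →
      Disjoint (A.image (fun s => s - a)) (A.image (fun s => s - b)) := by
    intro a ha b hb hab
    rw [Finset.disjoint_left]
    rintro x hxa hxb
    obtain ⟨s, hs, rfl⟩ := Finset.mem_image.1 hxa
    obtain ⟨s', hs', heq⟩ := Finset.mem_image.1 hxb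
    have heq' : s' - b = s - a := heq
    have hsS : s ∈ S := ((Set.Finite.mem_toFinset _).1 hs).1
    have hs'S : s' ∈ S := ((Set.Finite.mem_toFinset _).1 hs').1
    exact hdiff a ha b hb hab ⟨s, hsS, s', hs'S, by dsimp only; omega⟩
  have hBcard : B.card = T.card * A.card := by
    rw [hB, Finset.card_biUnion hdisj]
    rw [Finset.sum_congr rfl (fun a _ => Finset.card_image_of_injective A
      (fun x y hxy => by omega))]
    simp [mul_comm]
  have hsub : (B : Set ℤ) ⊆ ((T.image (fun a => -a) : Finset ℤ) : Set ℤ) + V := by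
    intro x hx
    obtain ⟨a, ha, hx⟩ := Finset.mem_biUnion.1 hx
    obtain ⟨s, hs, rfl⟩ := Finset.mem_image.1 hx
    have hsV : s ∈ V := ((Set.Finite.mem_toFinset _).1 hs).2
    exact Set.mem_add.2 ⟨-a, Finset.mem_coe.2 (Finset.mem_image.2 ⟨a, ha, rfl⟩), s, hsV, by ring⟩
  have hfin : (((T.image (fun a => -a) : Finset ℤ) : Set ℤ) + V).Finite :=
    (T.image (fun a => -a)).finite_toSet.add hV
  calc T.card * (S ∩ V).ncard = B.card := by rw [hAcard, hBcard]
    _ = (B : Set ℤ).ncard := (Set.ncard_coe_finset B).symm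
    _ ≤ _ := Set.ncard_le_ncard hsub hfin

private lemma ratio_le (n x y : ℕ) (hn : n ≠ 0) (h : n * x ≤ y) :
    (x : ℝ≥0∞) / (y : ℝ≥0∞) ≤ ((n : ℝ≥0∞))⁻¹ := by
  rcases Nat.eq_zero_or_pos y with rfl | hy
  · have hx : x = 0 := by
      rcases Nat.mul_eq_zero.1 (Nat.le_zero.1 h) with h' | h'
      · exact absurd h' hn
      · exact h'
    simp [hx]
  · have hy0 : (y : ℝ≥0∞) ≠ 0 := by exact_mod_cast hy.ne'
    rw [ENNReal.div_le_iff hy0 (ENNReal.natCast_ne_top y)]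
    calc (x : ℝ≥0∞) = (n : ℝ≥0∞)⁻¹ * ((n : ℝ≥0∞) * x) := by
          rw [← mul_assoc, ENNReal.inv_mul_cancel (by exact_mod_cast hn) (by simp), one_mul]
      _ ≤ (n : ℝ≥0∞)⁻¹ * y := by
          gcongr
          exact_mod_cast h
  
theorem diff_set_syndetic_int (S : Set ℤ) (h : 0 < banachDensityZ S) :
    (∃ K : Finset ℤ, (K : Set ℤ) + (S - S) = Set.univ) ∧
      ∃ M : ℕ, ∀ x : ℤ, ∃ t ∈ S - S, x ≤ t ∧ t ≤ x + M := by
  suffices h2 : ∃ M : ℕ, ∀ x : ℤ, ∃ t ∈ S - S, x ≤ t ∧ t ≤ x + M by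
    obtain ⟨M, hM⟩ := h2
    refine ⟨⟨Finset.Icc (-(M:ℤ)) 0, Set.eq_univ_of_forall fun x => ?_⟩, ⟨M, hM⟩⟩
    obtain ⟨t, ht, h1, h2⟩ := hM x
    exact ⟨x - t, by simp only [Finset.coe_Icc, Set.mem_Icc]; omega, t, ht, by ring⟩
  by_contra hgap
  push_neg at hgap
  -- hgap : ∀ M, ∃ x, ∀ t ∈ S - S, ¬ ...
  have hSne : S.Nonempty := by
    by_contra hne
    rw [Set.not_nonempty_iff_eq_empty] at hne
    have hle : banachDensityZ S ≤ 0 := by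
      calc banachDensityZ S
          ≤ ⨆ V ∈ {V : Set ℤ | V.Finite},
              ((S ∩ V).ncard : ℝ≥0∞) / ((({0} : Set ℤ) + V).ncard : ℝ≥0∞) :=
            iInf₂_le ({0} : Set ℤ) ⟨Set.finite_singleton 0, Set.singleton_nonempty 0⟩
        _ ≤ 0 := iSup₂_le fun V _ => by simp [hne]
    exact absurd h (by simpa using hle)
  obtain ⟨s, hs⟩ := hSne
  have h0 : (0:ℤ) ∈ S - S := ⟨s, hs, s, hs, sub_self s⟩
  have hgap' : ∀ M : ℕ, ∃ x : ℤ, ∀ t ∈ S - S, ¬(x ≤ t ∧ t ≤ x + M) := by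
    intro M
    obtain ⟨x, hx⟩ := hgap M
    exact ⟨x, fun t ht hc => absurd (hx t ht hc.1) (by omega)⟩
  obtain ⟨n, hn⟩ := ENNReal.exists_inv_nat_lt h.ne'
  have hn0 : n ≠ 0 := by
    rintro rfl
    simp at hn
  obtain ⟨T, hcard, hpos, hdiff⟩ := exists_sep S h0 hgap' n
  have hTne : T.Nonempty := Finset.card_pos.1 (hcard ▸ Nat.pos_of_ne_zero hn0)
  set F : Set ℤ := ((T.image (fun a => -a) : Finset ℤ) : Set ℤ) with hF
  have hle : banachDensityZ S ≤ (n : ℝ≥0∞)⁻¹ := by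
    calc banachDensityZ S
        ≤ ⨆ V ∈ {V : Set ℤ | V.Finite},
            ((S ∩ V).ncard : ℝ≥0∞) / ((F + V).ncard : ℝ≥0∞) :=
          iInf₂_le F ⟨(T.image (fun a => -a)).finite_toSet,
            Finset.coe_nonempty.2 (hTne.image (fun a => -a))⟩
      _ ≤ (n : ℝ≥0∞)⁻¹ := by
          refine iSup₂_le fun V hV => ratio_le n _ _ hn0 ?_
          have := count_le S T hdiff V hV
          rwa [hcard] at this
  exact absurd hle (not_le.2 hn)
end

section
/- Let G be a σ-finite abelian group, i.e. G = ∪_{n=1}^∞ H_n for an increasing sequence of finite subgroups H_n, and let A ⊆ G have positive upper density with respect to (H_n): d̄(A) := limsup_{n→∞} #(A∩H_n)/#H_n > 0. Then there exists a finite subset B ⊆ G with #B ≤ 1/d̄(A) such that A − A + B = G. -/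
open Set Pointwise Filter

theorem hegyvari_sigma_finite {G : Type*} [AddCommGroup G]
    (H : ℕ → AddSubgroup G) (hmono : Monotone H)
    (hfin : ∀ n, (H n : Set G).Finite)
    (hexh : (⋃ n, (H n : Set G)) = Set.univ)
    (A : Set G)
    (hpos : 0 < Filter.limsup
      (fun n => ((A ∩ (H n : Set G)).ncard : ℝ) / ((H n : Set G).ncard : ℝ)) Filter.atTop) :
    ∃ B : Finset G,
      (B.card : ℝ) ≤ 1 / Filter.limsup
        (fun n => ((A ∩ (H n : Set G)).ncard : ℝ) / ((H n : Set G).ncard : ℝ)) Filter.atTop ∧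
      A - A + (B : Set G) = Set.univ := by
  classical
  -- A is nonempty
  have hA : A.Nonempty := by
    by_contra h
    rw [Set.not_nonempty_iff_eq_empty] at h
    subst h
    simp only [Set.empty_inter, Set.ncard_empty, Nat.cast_zero, zero_div,
      Filter.limsup_const, lt_self_iff_false] at hpos
  set f : ℕ → ℝ := fun n => ((A ∩ (H n : Set G)).ncard : ℝ) / ((H n : Set G).ncard : ℝ)
    with hfdef
  set d := Filter.limsup f Filter.atTop with hd
  have hfnonneg : ∀ n, 0 ≤ f n := fun n => by
    simp only [hfdef]; positivity
  have hcob : Filter.IsCoboundedUnder (· ≤ ·) Filter.atTop f :=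
    (Filter.isBoundedUnder_of ⟨0, fun n => hfnonneg n⟩ :
      Filter.IsBoundedUnder (· ≥ ·) Filter.atTop f).isCoboundedUnder_le
  -- membership function
  have hmem : ∀ g : G, ∃ n, g ∈ H n := by
    intro g
    have : g ∈ ⋃ n, (H n : Set G) := hexh ▸ Set.mem_univ g
    simpa using this
  choose idx hidx using hmem
  -- disjoint translates predicate
  set P : Finset G → Prop := fun B =>
    ∀ b ∈ B, ∀ b' ∈ B, b ≠ b' → ∀ a ∈ A, ∀ a' ∈ A, a + b ≠ a' + b' with hP
  -- key counting lemma
  have key : ∀ B : Finset G, B.Nonempty → P B → (B.card : ℝ) * d ≤ 1 := by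
    intro B hBne hBP
    set N := B.sup idx with hN
    have hBcard : 0 < (B.card : ℝ) := by
      exact_mod_cast Finset.card_pos.mpr hBne
    have hbound : ∀ n, N ≤ n → f n ≤ 1 / B.card := by
      intro n hn
      have hAfin : (A ∩ (H n : Set G)).Finite := (hfin n).subset Set.inter_subset_right
      set K := (hfin n).toFinset with hK
      set AF := hAfin.toFinset with hAF
      have hbH : ∀ b ∈ B, b ∈ H n := by
        intro b hb
        exact hmono (le_trans (Finset.le_sup hb) hn) (hidx b)
      have hdisj : ∀ b ∈ B, ∀ b' ∈ B, b ≠ b' →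
          Disjoint (AF.image (· + b)) (AF.image (· + b')) := by
        intro b hb b' hb' hne
        rw [Finset.disjoint_left]
        rintro x hx hx'
        obtain ⟨a, ha, rfl⟩ := Finset.mem_image.mp hx
        obtain ⟨a', ha', heq⟩ := Finset.mem_image.mp hx'
        have haA : a ∈ A := (hAfin.mem_toFinset.mp ha).1
        have ha'A : a' ∈ A := (hAfin.mem_toFinset.mp ha').1
        exact hBP b hb b' hb' hne a haA a' ha'A heq.symm
      have hcard : (B.biUnion fun b => AF.image (· + b)).card = B.card * AF.card := by
        have himg : ∀ b, (AF.image (· + b)).card = AF.card := fun b =>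
          Finset.card_image_of_injective _ (add_left_injective b)
        rw [Finset.card_biUnion hdisj, Finset.sum_congr rfl (fun b _ => himg b),
          Finset.sum_const, smul_eq_mul]
      have hsub : (B.biUnion fun b => AF.image (· + b)) ⊆ K := by
        intro x hx
        obtain ⟨b, hb, hx⟩ := Finset.mem_biUnion.mp hx
        obtain ⟨a, ha, rfl⟩ := Finset.mem_image.mp hx
        have haH : a ∈ H n := (hAfin.mem_toFinset.mp ha).2
        exact (hfin n).mem_toFinset.mpr (add_mem haH (hbH b hb))
      have hle : B.card * AF.card ≤ K.card := hcard ▸ Finset.card_le_card hsub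
      have hKpos : 0 < (K.card : ℝ) := by
        have : (0 : G) ∈ K := (hfin n).mem_toFinset.mpr (zero_mem (H n))
        exact_mod_cast Finset.card_pos.mpr ⟨0, this⟩
      have hAFcard : (A ∩ (H n : Set G)).ncard = AF.card :=
        Set.ncard_eq_toFinset_card _ hAfin
      have hKcard : ((H n : Set G)).ncard = K.card :=
        Set.ncard_eq_toFinset_card _ (hfin n)
      have : f n = (AF.card : ℝ) / (K.card : ℝ) := by
        simp only [hfdef, hAFcard, hKcard]
      rw [this, div_le_div_iff₀ hKpos hBcard]
      have hle' : (B.card : ℝ) * AF.card ≤ K.card := by exact_mod_cast hle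
      nlinarith
    have hls : d ≤ 1 / B.card := by
      apply Filter.limsup_le_of_le hcob
      exact Filter.eventually_atTop.mpr ⟨N, hbound⟩
    calc (B.card : ℝ) * d ≤ (B.card : ℝ) * (1 / B.card) := by
            exact mul_le_mul_of_nonneg_left hls (le_of_lt hBcard)
      _ = 1 := by field_simp
  -- the collection of admissible cardinalities
  set T : Set ℕ := {k | ∃ B : Finset G, ((0 : G) ∈ B ∧ P B) ∧ B.card = k} with hT
  have hTne : T.Nonempty := by
    refine ⟨1, {0}, ⟨Finset.mem_singleton_self 0, ?_⟩, Finset.card_singleton 0⟩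
    intro b hb b' hb' hne
    rw [Finset.mem_singleton] at hb hb'
    exact absurd (hb.trans hb'.symm) hne
  have hTbdd : BddAbove T := by
    refine ⟨⌈1 / d⌉₊, ?_⟩
    rintro k ⟨B, ⟨hB0, hBP⟩, rfl⟩
    have h1 : (B.card : ℝ) * d ≤ 1 := key B ⟨0, hB0⟩ hBP
    have h2 : (B.card : ℝ) ≤ 1 / d := (le_div_iff₀ hpos).mpr h1
    have h3 : (B.card : ℝ) ≤ (⌈1 / d⌉₊ : ℝ) := h2.trans (Nat.le_ceil _)
    exact_mod_cast h3
  obtain ⟨B, ⟨hB0, hBP⟩, hBk⟩ : sSup T ∈ T := Nat.sSup_mem hTne hTbdd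
  refine ⟨B, ?_, ?_⟩
  · exact (le_div_iff₀ hpos).mpr (key B ⟨0, hB0⟩ hBP)
  · ext x
    simp only [Set.mem_univ, iff_true]
    by_contra hx
    have hxB : x ∉ B := by
      intro hxB
      obtain ⟨a, ha⟩ := hA
      exact hx (by
        have : a - a + x ∈ A - A + (B : Set G) :=
          Set.add_mem_add (Set.sub_mem_sub ha ha) hxB
        simpa using this)
    have hP' : P (insert x B) := by
      intro b hb b' hb' hne a ha a' ha' heq
      rcases Finset.mem_insert.mp hb with hbx | hbB
      · rcases Finset.mem_insert.mp hb' with hb'x | hb'B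
        · exact hne (hbx.trans hb'x.symm)
        · apply hx
          have hg : x = a' - a + b' := by
            rw [show a' - a + b' = a' + b' - a by abel, ← heq, hbx]; abel
          rw [hg]
          exact Set.add_mem_add (Set.sub_mem_sub ha' ha) hb'B
      · rcases Finset.mem_insert.mp hb' with hb'x | hb'B
        · apply hx
          have hg : x = a - a' + b := by
            rw [show a - a' + b = a + b - a' by abel, heq, hb'x]; abel
          rw [hg]
          exact Set.add_mem_add (Set.sub_mem_sub ha ha') hbB
        · exact hBP b hbB b' hb'B hne a ha a' ha' heq
    have hmemT : (insert x B).card ∈ T :=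
      ⟨insert x B, ⟨Finset.mem_insert_of_mem hB0, hP'⟩, rfl⟩
    have hle : (insert x B).card ≤ sSup T := le_csSup hTbdd hmemT
    rw [Finset.card_insert_of_notMem hxB, hBk] at hle
    omega
end

section
/- Let S := {1/n : n ∈ ℕ, n ≥ 1} ⊆ ℝ. Then the uniform asymptotic upper density of S with respect to its counting measure and Lebesgue measure is infinite, D̄(#|_S;|·|) = +∞, and yet S − S ⊆ [−2,2] and S − S is not syndetic in ℝ. -/
open MeasureTheory Set Pointwise Filter ENNReal

/-! Every point of `S = {1/n}` lies in `[0, 1]`, so `S` is a single bounded Borel set with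
compact closure carrying infinite counting measure. For each compact `C` the quotient
`#S / |C + S|` is therefore `∞ / (finite) = ∞`, which makes the density infinite. On the other
hand `S - S ⊆ [-1, 1]` is bounded, and a compact set of translates of a bounded set is bounded,
so it cannot cover `ℝ`. -/

theorem uaud_eq_top_of_apply_eq_top {G : Type*} [AddCommGroup G] [TopologicalSpace G]
    [ContinuousAdd G] [MeasurableSpace G] (ν μ : Measure G) [IsFiniteMeasureOnCompacts μ]
    {V : Set G} (hV : MeasurableSet V) (hVc : IsCompact (closure V)) (hνV : ν V = ⊤) :
    uaud ν μ = ⊤ := by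
  simp only [uaud, mem_ofPred_eq, iInf_eq_top]
  rintro C ⟨hC, -⟩
  have hCV : μ (C + V) ≠ ⊤ :=
    ((measure_mono (add_subset_add_left subset_closure)).trans_lt
      (hC.add hVc).measure_lt_top).ne
  refine top_le_iff.mp ?_
  calc (⊤ : ℝ≥0∞) = ν V / μ (C + V) := by rw [hνV, top_div_of_ne_top hCV]
    _ ≤ _ := le_iSup₂ (f := fun V (_ : MeasurableSet V ∧ IsCompact (closure V)) ↦
        ν V / μ (C + V)) V ⟨hV, hVc⟩

theorem countOn_apply_self_eq_top {G : Type*} [MeasurableSpace G] {S : Set G}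
    (hS : MeasurableSet S) (hinf : S.Infinite) : countOn S S = ⊤ := by
  have : Infinite S := hinf.to_subtype
  have hdirac (s : S) : Measure.dirac (s : G) S = 1 := by
    simp [Measure.dirac_apply' _ hS, s.2]
  rw [countOn, Measure.sum_apply _ hS, tsum_congr hdirac]
  exact tsum_const_eq_top_of_ne_zero one_ne_zero

theorem not_isSyndetic_of_isBounded {G : Type*} [SeminormedAddCommGroup G]
    (huniv : ¬Bornology.IsBounded (univ : Set G)) {T : Set G} (hT : Bornology.IsBounded T) :
    ¬IsSyndetic T := by
  rintro ⟨K, hK, hKT⟩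
  exact huniv (hKT ▸ hK.isBounded.add hT)

def reciprocals : Set ℝ := {x : ℝ | ∃ n : ℕ, 1 ≤ n ∧ x = 1 / (n : ℝ)}

namespace reciprocals

theorem subset_Icc : reciprocals ⊆ Icc 0 1 := by
  rintro _ ⟨n, hn, rfl⟩
  have hn' : (1 : ℝ) ≤ n := by exact_mod_cast hn
  exact ⟨by positivity, (div_le_one (by positivity)).mpr hn'⟩

theorem sub_subset_Icc : reciprocals - reciprocals ⊆ Icc (-1) 1 := by
  rintro _ ⟨x, hx, y, hy, rfl⟩
  obtain ⟨hx0, hx1⟩ := subset_Icc hx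
  obtain ⟨hy0, hy1⟩ := subset_Icc hy
  constructor <;> linarith

theorem countable : reciprocals.Countable :=
  (countable_range fun n : ℕ ↦ 1 / (n : ℝ)).mono fun _ ⟨n, _, hx⟩ ↦ mem_range.mpr ⟨n, hx.symm⟩

theorem infinite : reciprocals.Infinite := by
  refine infinite_of_injective_forall_mem (f := fun n : ℕ ↦ 1 / ((n : ℝ) + 1)) ?_ ?_
  · intro a b hab
    simpa using hab
  · intro n
    exact ⟨n + 1, le_add_self, by push_cast; rfl⟩

theorem isCompact_closure : IsCompact (closure reciprocals) :=
  (Metric.isBounded_Icc (0 : ℝ) 1).subset subset_Icc |>.isCompact_closure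

end reciprocals

theorem infinite_density_not_syndetic :
    uaud (countOn {x : ℝ | ∃ n : ℕ, 1 ≤ n ∧ x = 1 / (n : ℝ)}) volume = ⊤ ∧
    {x : ℝ | ∃ n : ℕ, 1 ≤ n ∧ x = 1 / (n : ℝ)} - {x : ℝ | ∃ n : ℕ, 1 ≤ n ∧ x = 1 / (n : ℝ)}
      ⊆ Set.Icc (-2 : ℝ) 2 ∧
    ¬ IsSyndetic
      ({x : ℝ | ∃ n : ℕ, 1 ≤ n ∧ x = 1 / (n : ℝ)} -
        {x : ℝ | ∃ n : ℕ, 1 ≤ n ∧ x = 1 / (n : ℝ)}) := by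
  change uaud (countOn reciprocals) volume = ⊤ ∧ reciprocals - reciprocals ⊆ Icc (-2) 2 ∧
    ¬IsSyndetic (reciprocals - reciprocals)
  have hmeas : MeasurableSet reciprocals := reciprocals.countable.measurableSet
  refine ⟨?_, ?_, ?_⟩
  · exact uaud_eq_top_of_apply_eq_top _ _ hmeas reciprocals.isCompact_closure
      (countOn_apply_self_eq_top hmeas reciprocals.infinite)
  · exact reciprocals.sub_subset_Icc.trans (Icc_subset_Icc (by norm_num) (by norm_num))
  · exact not_isSyndetic_of_isBounded (NormedSpace.unbounded_univ ℝ ℝ)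
      ((Metric.isBounded_Icc (-1 : ℝ) 1).subset reciprocals.sub_subset_Icc)
end
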